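/- arXiv:2206.01671 — 10 statements merged into one kernel-verified Lean document; each statement's English description precedes it below -/
import Mathlib

section
/- Every first-countable T1 topological space that has a σ-discrete closed network is symmetrizable. -/
/-!
Fix antitone neighbourhood bases `B x n` and call `y` `n`-near `x` if `y ∈ B x n` and every
member of `F 0, …, F n` containing `y` also contains `x`. Since each `F m` is a discrete family
of closed sets, the points `n`-near `x` form a neighbourhood of `x`; since `⋃ n, F n` is a
network, a point `y` such that `y` is `n`-near `x` or `x` is `n`-near `y` lies in any given open
set around `x` once `n` is large. Hence `d x y = 1 / (N + 1)`, with `N` the first level at which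
neither point is near the other, is a symmetric generating the topology.
-/

open Set Filter Topology

/-- A symmetric on `X`: nonnegative, vanishing exactly on the diagonal, symmetric. -/
def SymmetricDist {X : Type*} (d : X → X → ℝ) : Prop :=
  (∀ x y, 0 ≤ d x y) ∧ (∀ x y, d x y = 0 ↔ x = y) ∧ (∀ x y, d x y = d y x)

/-- The topology of `X` is generated by the premetric `d`: a set is open iff
every point of it contains some `d`-ball around the point. -/
def GeneratesTopology {X : Type*} [TopologicalSpace X] (d : X → X → ℝ) : Prop :=
  ∀ U : Set X, IsOpen U ↔ ∀ x ∈ U, ∃ ε > 0, {y : X | d x y < ε} ⊆ U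

/-- A topological space is symmetrizable if its topology is generated by some symmetric. -/
def Symmetrizable (X : Type*) [TopologicalSpace X] : Prop :=
  ∃ d : X → X → ℝ, SymmetricDist d ∧ GeneratesTopology d

/-- A family `F` of subsets of `X` is a network: for every open `U` and `x ∈ U`
there is `A ∈ F` with `x ∈ A ⊆ U`. -/
def IsNetwork {X : Type*} [TopologicalSpace X] (F : Set (Set X)) : Prop :=
  ∀ U : Set X, IsOpen U → ∀ x ∈ U, ∃ A ∈ F, x ∈ A ∧ A ⊆ U

/-- A family of subsets is discrete if every point has an (open) neighborhood
meeting at most one member of the family. -/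
def IsDiscreteFamily {X : Type*} [TopologicalSpace X] (F : Set (Set X)) : Prop :=
  ∀ x : X, ∃ U : Set X, IsOpen U ∧ x ∈ U ∧
    {A ∈ F | (A ∩ U).Nonempty}.Subsingleton

section Levels

variable {X : Type*} [TopologicalSpace X]

theorem symmetrizable_of_symmetric_levels (S : X → X → ℕ → Prop)
    (symm : ∀ x y n, S x y n ↔ S y x n) (anti : ∀ x y, Antitone (S x y))
    (sep : ∀ x y, x ≠ y → ∃ n, ¬S x y n)
    (isOpen_iff : ∀ U : Set X, IsOpen U ↔ ∀ x ∈ U, ∃ n, ∀ y, S x y n → y ∈ U) :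
    Symmetrizable X := by
  classical
  let d : X → X → ℝ := fun x y =>
    if h : x = y then 0 else 1 / ((Nat.find (sep x y h) : ℝ) + 1)
  have ball_iff : ∀ x y (n : ℕ), d x y < 1 / ((n : ℝ) + 1) ↔ x = y ∨ S x y n := by
    intro x y n
    by_cases h : x = y
    · simp only [d, h, true_or, iff_true]
      positivity
    · simp only [d, dif_neg h, h, false_or]
      rw [one_div_lt_one_div (by positivity) (by positivity), add_lt_add_iff_right,
        Nat.cast_lt, Nat.lt_find_iff]
      exact ⟨fun H => not_not.1 (H n le_rfl), fun H m hm => not_not.2 (anti x y hm H)⟩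
  refine ⟨d, ⟨fun x y => ?_, fun x y => ?_, fun x y => ?_⟩, fun U => ?_⟩
  · unfold d
    split_ifs <;> positivity
  · unfold d
    split_ifs with h
    · simp [h]
    · simpa [h] using (Nat.cast_add_one_pos _).ne'
  · by_cases h : x = y
    · rw [h]
    · simp only [d, dif_neg h, dif_neg (Ne.symm h)]
      congr 3
      exact Nat.find_congr' (not_congr (symm x y _))
  · rw [isOpen_iff U]
    refine forall₂_congr fun x hx => ⟨fun ⟨n, hn⟩ => ?_, fun ⟨ε, hε, hball⟩ => ?_⟩
    · refine ⟨1 / ((n : ℝ) + 1), by positivity, fun y hy => ?_⟩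
      rcases (ball_iff x y n).1 hy with rfl | hy
      exacts [hx, hn y hy]
    · obtain ⟨n, hn⟩ := exists_nat_one_div_lt hε
      exact ⟨n, fun y hy => hball (((ball_iff x y n).2 (Or.inr hy)).trans hn)⟩

theorem symmetrizable_of_levels (R : X → X → ℕ → Prop) (anti : ∀ x y, Antitone (R x y))
    (sep : ∀ x y, x ≠ y → ∃ n, ¬R x y n) (eventually : ∀ x n, ∀ᶠ y in 𝓝 x, R x y n)
    (isOpen : ∀ U : Set X, IsOpen U → ∀ x ∈ U, ∃ n, ∀ y, R x y n ∨ R y x n → y ∈ U) :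
    Symmetrizable X := by
  refine symmetrizable_of_symmetric_levels (fun x y n => R x y n ∨ R y x n)
    (fun _ _ _ => or_comm) (fun x y m n hmn => Or.imp (anti x y hmn) (anti y x hmn))
    (fun x y hxy => ?_) (fun U => ⟨isOpen U, fun h => isOpen_iff_mem_nhds.2 fun x hx => ?_⟩)
  · obtain ⟨m, hm⟩ := sep x y hxy
    obtain ⟨n, hn⟩ := sep y x (Ne.symm hxy)
    exact ⟨max m n, not_or.2
      ⟨mt (anti x y (le_max_left m n)) hm, mt (anti y x (le_max_right m n)) hn⟩⟩
  · obtain ⟨n, hn⟩ := h x hx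
    exact (eventually x n).mono fun y hy => hn y (Or.inl hy)

end Levels

namespace IsDiscreteFamily

variable {X : Type*} [TopologicalSpace X] {F : Set (Set X)}

theorem mono {G : Set (Set X)} (hG : IsDiscreteFamily G) (hFG : F ⊆ G) : IsDiscreteFamily F :=
  fun x => (hG x).imp fun _ ⟨hU, hxU, hsub⟩ =>
    ⟨hU, hxU, hsub.anti fun _ hA => ⟨hFG hA.1, hA.2⟩⟩

theorem locallyFinite (hF : IsDiscreteFamily F) : LocallyFinite ((↑) : F → Set X) := fun x => by
  obtain ⟨U, hU, hxU, hsub⟩ := hF x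
  exact ⟨U, hU.mem_nhds hxU, (hsub.finite.preimage Subtype.val_injective.injOn).subset
    fun A hA => ⟨A.2, hA⟩⟩

theorem isClosed_sUnion (hF : IsDiscreteFamily F) (hc : ∀ A ∈ F, IsClosed A) :
    IsClosed (⋃₀ F) := by
  rw [sUnion_eq_iUnion]
  exact hF.locallyFinite.isClosed_iUnion fun A => hc A A.2

theorem eventually_mem_imp_mem (hF : IsDiscreteFamily F) (hc : ∀ A ∈ F, IsClosed A) (x : X) :
    ∀ᶠ y in 𝓝 x, ∀ A ∈ F, y ∈ A → x ∈ A := by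
  have hclosed : IsClosed (⋃₀ {A ∈ F | x ∉ A}) :=
    (hF.mono (sep_subset F _)).isClosed_sUnion fun A hA => hc A hA.1
  filter_upwards [hclosed.isOpen_compl.mem_nhds fun ⟨_, hA, hxA⟩ => hA.2 hxA] with y hy A hA hyA
  by_contra hxA
  exact hy ⟨A, ⟨hA, hxA⟩, hyA⟩

end IsDiscreteFamily

def NetworkNear {X : Type*} (B : X → ℕ → Set X) (F : ℕ → Set (Set X)) (x y : X) (n : ℕ) :
    Prop :=
  y ∈ B x n ∧ ∀ m ≤ n, ∀ A ∈ F m, y ∈ A → x ∈ A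

theorem NetworkNear.antitone {X : Type*} {B : X → ℕ → Set X} {F : ℕ → Set (Set X)}
    (hB : ∀ x, Antitone (B x)) (x y : X) : Antitone (NetworkNear B F x y) :=
  fun _ _ hmn ⟨hy, hA⟩ => ⟨hB x hmn hy, fun m hm => hA m (hm.trans hmn)⟩

namespace NetworkNear

variable {X : Type*} [TopologicalSpace X] {B : X → ℕ → Set X} {F : ℕ → Set (Set X)}

theorem exists_not [T1Space X] (hB : ∀ x, (𝓝 x).HasAntitoneBasis (B x)) {x y : X}
    (hxy : x ≠ y) : ∃ n, ¬NetworkNear B F x y n := by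
  obtain ⟨n, hn⟩ := (hB x).mem_iff.1 (isOpen_compl_singleton.mem_nhds hxy)
  exact ⟨n, fun h => hn h.1 rfl⟩

theorem eventually (hB : ∀ x n, B x n ∈ 𝓝 x)
    (hdisc : ∀ n, IsDiscreteFamily (F n)) (hclosed : ∀ A ∈ ⋃ n, F n, IsClosed A) (x : X)
    (n : ℕ) : ∀ᶠ y in 𝓝 x, NetworkNear B F x y n := by
  have hlevels : ∀ᶠ y in 𝓝 x, ∀ m ∈ Iic n, ∀ A ∈ F m, y ∈ A → x ∈ A :=
    (eventually_all_finite (finite_Iic n)).2 fun m _ =>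
      (hdisc m).eventually_mem_imp_mem (fun A hA => hclosed A (mem_iUnion_of_mem m hA)) x
  filter_upwards [hB x n, hlevels] with y hy hA using ⟨hy, hA⟩

theorem mem_of_isOpen (hB : ∀ x, (𝓝 x).HasAntitoneBasis (B x)) (hnet : IsNetwork (⋃ n, F n))
    {U : Set X} (hU : IsOpen U) {x : X} (hx : x ∈ U) :
    ∃ n, ∀ y, NetworkNear B F x y n ∨ NetworkNear B F y x n → y ∈ U := by
  obtain ⟨A, hAF, hxA, hAU⟩ := hnet U hU x hx
  obtain ⟨m, hAm⟩ := mem_iUnion.1 hAF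
  obtain ⟨k, hk⟩ := (hB x).mem_iff.1 (hU.mem_nhds hx)
  refine ⟨max m k, fun y hy => ?_⟩
  rcases hy with ⟨hyB, -⟩ | ⟨-, hA⟩
  · exact hk ((hB x).antitone (le_max_right m k) hyB)
  · exact hAU (hA m (le_max_left m k) A hAm hxA)

end NetworkNear

/-- Every first-countable T1 space with a σ-discrete closed network is symmetrizable. -/
theorem arhangelskii_symmetrizable {X : Type*} [TopologicalSpace X]
    [FirstCountableTopology X] [T1Space X]
    (F : ℕ → Set (Set X)) (hdisc : ∀ n, IsDiscreteFamily (F n))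
    (hnet : IsNetwork (⋃ n, F n)) (hclosed : ∀ A ∈ ⋃ n, F n, IsClosed A) :
    Symmetrizable X := by
  choose B hB using fun x : X => (𝓝 x).exists_antitone_basis
  exact symmetrizable_of_levels (NetworkNear B F)
    (NetworkNear.antitone fun x => (hB x).antitone)
    (fun _ _ => NetworkNear.exists_not hB)
    (NetworkNear.eventually (fun x => (hB x).mem) hdisc hclosed)
    (fun _ hU _ => NetworkNear.mem_of_isOpen hB hnet hU)
end

section
/- Every first-countable T1 topological space that has a countable closed network is symmetrizable. -/
open Filter Set Topology

section FirstIndexDist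

variable {X : Type*}

open Classical in
noncomputable def firstIndexDist (R : ℕ → X → X → Prop) (x y : X) : ℝ :=
  if h : ∃ m, R m x y then 1 / (Nat.find h + 1) else 0

variable {R : ℕ → X → X → Prop}

theorem firstIndexDist_nonneg (x y : X) : 0 ≤ firstIndexDist R x y := by
  unfold firstIndexDist
  split <;> positivity

theorem firstIndexDist_eq_zero_iff {x y : X} : firstIndexDist R x y = 0 ↔ ∀ m, ¬R m x y := by
  unfold firstIndexDist
  split_ifs with h
  · simpa [Nat.cast_add_one_ne_zero] using h
  · simpa using h

theorem firstIndexDist_comm (hR : ∀ m x y, R m x y → R m y x) (x y : X) :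
    firstIndexDist R x y = firstIndexDist R y x := by
  have hiff : ∀ m, R m x y ↔ R m y x := fun m => ⟨hR m x y, hR m y x⟩
  classical
  unfold firstIndexDist
  split_ifs with hxy hyx hyx
  · rw [Nat.find_congr' (hiff _)]
  · exact absurd ((exists_congr hiff).1 hxy) hyx
  · exact absurd ((exists_congr hiff).2 hyx) hxy
  · rfl

theorem firstIndexDist_lt_one_div_iff {x y : X} {N : ℕ} :
    firstIndexDist R x y < 1 / (N + 1) ↔ ∀ m ≤ N, ¬R m x y := by
  classical
  unfold firstIndexDist
  split_ifs with h
  · rw [one_div_lt_one_div (by positivity) (by positivity), add_lt_add_iff_right, Nat.cast_lt,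
      Nat.lt_find_iff]
  · push Not at h
    exact iff_of_true (by positivity) fun m _ => h m

theorem symmetricDist_firstIndexDist (hR : ∀ m x y, R m x y → R m y x)
    (hirrefl : ∀ m x, ¬R m x x) (hsep : ∀ x y, x ≠ y → ∃ m, R m x y) :
    SymmetricDist (firstIndexDist R) := by
  refine ⟨firstIndexDist_nonneg, fun x y => ?_, firstIndexDist_comm hR⟩
  rw [firstIndexDist_eq_zero_iff]
  refine ⟨fun h => by_contra fun hxy => ?_, fun hxy m => hxy ▸ hirrefl m x⟩
  obtain ⟨m, hm⟩ := hsep x y hxy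
  exact h m hm

variable [TopologicalSpace X]

theorem generatesTopology_firstIndexDist
    (hopen : ∀ U, IsOpen U → ∀ x ∈ U, ∃ m, ∀ y ∉ U, R m x y)
    (hnhds : ∀ m x, ∀ᶠ y in 𝓝 x, ¬R m x y) :
    GeneratesTopology (firstIndexDist R) := by
  refine fun U => ⟨fun hU x hx => ?_, fun hball => isOpen_iff_mem_nhds.2 fun x hx => ?_⟩
  · obtain ⟨m, hm⟩ := hopen U hU x hx
    refine ⟨1 / (m + 1), by positivity, fun y hy => by_contra fun hyU => ?_⟩
    exact firstIndexDist_lt_one_div_iff.1 hy m le_rfl (hm y hyU)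
  · obtain ⟨ε, hε, hεU⟩ := hball x hx
    obtain ⟨N, hN⟩ := exists_nat_one_div_lt hε
    have hsmall : ∀ᶠ y in 𝓝 x, ∀ m ∈ {m | m ≤ N}, ¬R m x y :=
      (eventually_all_finite (finite_le_nat N)).2 fun m _ => hnhds m x
    filter_upwards [hsmall] with y hy
    exact hεU ((firstIndexDist_lt_one_div_iff.2 hy).trans hN)

theorem symmetrizable_of_relation_seq [T1Space X] (hR : ∀ m x y, R m x y → R m y x)
    (hopen : ∀ U, IsOpen U → ∀ x ∈ U, ∃ m, ∀ y ∉ U, R m x y)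
    (hnhds : ∀ m x, ∀ᶠ y in 𝓝 x, ¬R m x y) :
    Symmetrizable X := by
  refine ⟨firstIndexDist R, symmetricDist_firstIndexDist hR (fun m x => (hnhds m x).self_of_nhds)
    fun x y hxy => ?_, generatesTopology_firstIndexDist hopen hnhds⟩
  obtain ⟨m, hm⟩ := hopen {y}ᶜ isOpen_compl_singleton x hxy
  exact ⟨m, hm y (not_not_intro rfl)⟩

end FirstIndexDist

theorem IsNetwork.mono {X : Type*} [TopologicalSpace X] {F G : Set (Set X)} (hF : IsNetwork F)
    (hFG : F ⊆ G) : IsNetwork G := fun U hU x hx =>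
  let ⟨A, hA, hxA, hAU⟩ := hF U hU x hx
  ⟨A, hFG hA, hxA, hAU⟩

section ClosedNetwork

variable {X : Type*} [TopologicalSpace X] {A : ℕ → Set X} {V : X → ℕ → Set X}

def NetworkSeparates (A : ℕ → Set X) (V : X → ℕ → Set X) (m : ℕ) (x y : X) : Prop :=
  x ∈ A m.unpair.1 ∧ y ∉ A m.unpair.1 ∧ y ∉ V x m.unpair.2

theorem exists_networkSeparates_of_isOpen (hnet : IsNetwork (range A))
    (hV : ∀ x, (𝓝 x).HasBasis (fun _ => True) (V x)) {U : Set X} (hU : IsOpen U) {x : X}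
    (hx : x ∈ U) : ∃ m, ∀ y ∉ U, NetworkSeparates A V m x y := by
  obtain ⟨-, ⟨n, rfl⟩, hxA, hAU⟩ := hnet U hU x hx
  obtain ⟨k, -, hVU⟩ := (hV x).mem_iff.1 (hU.mem_nhds hx)
  refine ⟨Nat.pair n k, fun y hy => ?_⟩
  simp only [NetworkSeparates, Nat.unpair_pair]
  exact ⟨hxA, fun h => hy (hAU h), fun h => hy (hVU h)⟩

theorem eventually_not_networkSeparates (hclosed : ∀ n, IsClosed (A n))
    (hV : ∀ x k, V x k ∈ 𝓝 x) (m : ℕ) (x : X) :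
    ∀ᶠ y in 𝓝 x, ¬(NetworkSeparates A V m x y ∨ NetworkSeparates A V m y x) := by
  by_cases hx : x ∈ A m.unpair.1
  · filter_upwards [hV x m.unpair.2] with y hy
    rintro (⟨-, -, hy'⟩ | ⟨-, hx', -⟩)
    exacts [hy' hy, hx' hx]
  · filter_upwards [(hclosed _).isOpen_compl.mem_nhds hx] with y hy
    rintro (⟨hx', -, -⟩ | ⟨hy', -, -⟩)
    exacts [hx hx', hy hy']

theorem symmetrizable_of_closed_network_seq [T1Space X] (hnet : IsNetwork (range A))
    (hclosed : ∀ n, IsClosed (A n)) (hV : ∀ x, (𝓝 x).HasBasis (fun _ => True) (V x)) :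
    Symmetrizable X :=
  symmetrizable_of_relation_seq (fun _ _ _ => Or.symm)
    (fun _U hU _x hx => (exists_networkSeparates_of_isOpen hnet hV hU hx).imp
      fun _m hm y hy => Or.inl (hm y hy))
    (eventually_not_networkSeparates hclosed fun x _ => (hV x).mem_of_mem trivial)

end ClosedNetwork

/-- Every first-countable T1 space with a countable closed network is symmetrizable. -/
theorem countable_closed_network_symmetrizable {X : Type*} [TopologicalSpace X]
    [FirstCountableTopology X] [T1Space X]
    (F : Set (Set X)) (hcount : F.Countable)
    (hnet : IsNetwork F) (hclosed : ∀ A ∈ F, IsClosed A) :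
    Symmetrizable X := by
  -- adding `∅` makes the family nonempty, so that `ℕ` can enumerate it
  obtain ⟨A, hA⟩ := (hcount.insert ∅).exists_eq_range (insert_nonempty _ _)
  choose V hV using fun x : X => (𝓝 x).exists_antitone_basis
  have hnetA : IsNetwork (range A) := hA ▸ hnet.mono (subset_insert _ _)
  have hclosedA : ∀ B ∈ range A, IsClosed B :=
    hA ▸ forall_mem_insert.2 ⟨isClosed_empty, hclosed⟩
  exact symmetrizable_of_closed_network_seq hnetA (forall_mem_range.1 hclosedA)
    fun x => (hV x).toHasBasis
end

section
/- Let X be a first-countable Hausdorff topological space whose topology is generated by a symmetric d. Then for every point x ∈ X and every ε > 0, the point x lies in the interior of the ball B_d(x;ε) = {y ∈ X : d(x,y) < ε}. -/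
namespace GeneratesTopology

variable {X : Type*} [TopologicalSpace X] {d : X → X → ℝ}

theorem isClosed_of_isClosed_insert (hgen : GeneratesTopology d) {S : Set X} {x : X}
    (hclosed : IsClosed (insert x S)) {ε : ℝ} (hε : 0 < ε) (hball : {y | d x y < ε} ⊆ Sᶜ) :
    IsClosed S := by
  refine ⟨(hgen Sᶜ).mpr fun z hz => ?_⟩
  rcases eq_or_ne z x with rfl | hzx
  · exact ⟨ε, hε, hball⟩
  · have hz' : z ∈ (insert x S)ᶜ := fun h => (Set.mem_insert_iff.mp h).elim hzx hz
    obtain ⟨δ, hδ, hsub⟩ := (hgen _).mp hclosed.isOpen_compl z hz'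
    exact ⟨δ, hδ, hsub.trans (Set.compl_subset_compl.mpr (Set.subset_insert x S))⟩

end GeneratesTopology

/-- In a first-countable Hausdorff space whose topology is generated by a symmetric `d`,
every point lies in the interior of every ball around it. -/
theorem mem_interior_ball {X : Type*} [TopologicalSpace X]
    [FirstCountableTopology X] [T2Space X]
    (d : X → X → ℝ) (hsym : SymmetricDist d) (hgen : GeneratesTopology d)
    (x : X) (ε : ℝ) (hε : 0 < ε) :
    x ∈ interior {y : X | d x y < ε} := by
  by_contra hx
  rw [interior_eq_compl_closure_compl, Set.notMem_compl_iff, mem_closure_iff_seq_limit] at hx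
  obtain ⟨y, hy_far, hy_lim⟩ := hx
  have hball : {z | d x z < ε} ⊆ (Set.range y)ᶜ := by
    rintro _ hz ⟨n, rfl⟩
    exact hy_far n hz
  have hclosed : IsClosed (Set.range y) :=
    hgen.isClosed_of_isClosed_insert hy_lim.isCompact_insert_range.isClosed hε hball
  obtain ⟨n, hn⟩ : x ∈ Set.range y :=
    hclosed.mem_of_tendsto hy_lim (.of_forall Set.mem_range_self)
  have hxx : d x x = 0 := (hsym.2.1 x x).mpr rfl
  exact hball (show d x x < ε by rwa [hxx]) ⟨n, hn⟩
end

section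
/- Every perfect second-countable T1 topological space is symmetrizable. -/
/-!
Perfectness makes every basic open set `B` a countable union of closed sets, so a countable
basis yields a sequence of pairs `F n ⊆ U n`, `F n` closed and `U n` open, such that every
neighbourhood `V` of a point `x` satisfies `x ∈ F n` and `U n ⊆ V` for some `n`.
Say that pair `n` separates `x` and `y` if one of them lies in `F n` and the other outside
`U n`, and set `d x y = 1 / (n + 1)` for the least such `n` (and `0` if there is none).
Then `d x y < 1 / (N + 1)` means that none of the pairs `0, …, N` separates `x` and `y`,
a condition on `y` that defines a neighbourhood of `x`; conversely every neighbourhood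
of `x` contains such a ball. So the `d`-balls around `x` form a basis of `𝓝 x`.
-/

open Set Filter Topology

theorem GeneratesTopology.of_hasBasis {X : Type*} [TopologicalSpace X] {d : X → X → ℝ}
    (h : ∀ x, (𝓝 x).HasBasis (fun ε : ℝ => 0 < ε) fun ε => {y | d x y < ε}) :
    GeneratesTopology d := fun U => by
  simp only [isOpen_iff_mem_nhds, (h _).mem_iff, gt_iff_lt]

section InvSuccFind

open Classical in
noncomputable def invSuccFind (p : ℕ → Prop) : ℝ :=
  if h : ∃ n, p n then 1 / (Nat.find h + 1 : ℝ) else 0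

variable {p : ℕ → Prop}

theorem invSuccFind_nonneg : 0 ≤ invSuccFind p := by
  unfold invSuccFind
  split <;> positivity

theorem invSuccFind_eq_zero_iff : invSuccFind p = 0 ↔ ∀ n, ¬ p n := by
  unfold invSuccFind
  split
  · next h => simpa [Nat.cast_add_one_ne_zero] using h
  · next h => simpa using h

theorem invSuccFind_lt_iff (N : ℕ) : invSuccFind p < 1 / (N + 1 : ℝ) ↔ ∀ n ≤ N, ¬ p n := by
  classical
  unfold invSuccFind
  split
  · next h =>
    rw [one_div_lt_one_div (by positivity) (by positivity), add_lt_add_iff_right,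
      Nat.cast_lt, Nat.lt_find_iff]
  · next h =>
    push Not at h
    simp only [one_div, inv_pos]
    exact iff_of_true (by positivity) fun n _ => h n

end InvSuccFind

section PairDist

variable {X : Type*}

def PairSeparates (F U : ℕ → Set X) (n : ℕ) (x y : X) : Prop :=
  x ∈ F n ∧ y ∉ U n ∨ y ∈ F n ∧ x ∉ U n

theorem pairSeparates_comm {F U : ℕ → Set X} {n : ℕ} {x y : X} :
    PairSeparates F U n x y ↔ PairSeparates F U n y x :=
  or_comm

noncomputable def pairDist (F U : ℕ → Set X) (x y : X) : ℝ :=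
  invSuccFind fun n => PairSeparates F U n x y

end PairDist

section PairNetwork

variable {X : Type*} [TopologicalSpace X]

structure IsClosedPairNetwork (F U : ℕ → Set X) : Prop where
  isClosed : ∀ n, IsClosed (F n)
  isOpen : ∀ n, IsOpen (U n)
  subset : ∀ n, F n ⊆ U n
  exists_mem_subset : ∀ x V, IsOpen V → x ∈ V → ∃ n, x ∈ F n ∧ U n ⊆ V

theorem exists_isClosedPairNetwork [SecondCountableTopology X]
    (hperf : ∀ F : Set X, IsClosed F → IsGδ F) :
    ∃ F U : ℕ → Set X, IsClosedPairNetwork F U := by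
  obtain ⟨b, hb⟩ := TopologicalSpace.exists_seq_basis (α := X)
  choose G hGopen hG using fun m =>
    (hperf (b m)ᶜ (hb.isOpen (mem_range_self m)).isClosed_compl).eq_iInter_nat
  refine ⟨fun n => (G n.unpair.1 n.unpair.2)ᶜ, fun n => b n.unpair.1,
    ⟨fun n => (hGopen _ _).isClosed_compl, fun n => hb.isOpen (mem_range_self _), fun n => ?_, ?_⟩⟩
  · rw [compl_subset_comm, hG]
    exact iInter_subset _ _
  · intro x V hV hxV
    obtain ⟨_, ⟨m, rfl⟩, hxb, hbV⟩ := hb.exists_subset_of_mem_open hxV hV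
    have hxG : x ∉ ⋂ k, G m k := by
      rw [← hG]
      exact not_not_intro hxb
    obtain ⟨k, hxk⟩ : ∃ k, x ∉ G m k := by
      simpa using hxG
    exact ⟨Nat.pair m k, by simpa using hxk, by simpa using hbV⟩

namespace IsClosedPairNetwork

variable {F U : ℕ → Set X}

theorem not_pairSeparates_self (h : IsClosedPairNetwork F U) (n : ℕ) (x : X) :
    ¬ PairSeparates F U n x x := by
  rintro (⟨hF, hU⟩ | ⟨hF, hU⟩) <;> exact hU (h.subset n hF)

theorem exists_pairSeparates [T1Space X] (h : IsClosedPairNetwork F U) {x y : X} (hxy : x ≠ y) :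
    ∃ n, PairSeparates F U n x y := by
  obtain ⟨n, hx, hU⟩ := h.exists_mem_subset x {y}ᶜ isOpen_compl_singleton hxy
  exact ⟨n, .inl ⟨hx, fun hy => hU hy rfl⟩⟩

theorem setOf_not_pairSeparates_mem_nhds (h : IsClosedPairNetwork F U) (n : ℕ) (x : X) :
    {y | ¬ PairSeparates F U n x y} ∈ 𝓝 x := by
  by_cases hxF : x ∈ F n
  · filter_upwards [(h.isOpen n).mem_nhds (h.subset n hxF)] with y hyU
    rintro (⟨-, hyU'⟩ | ⟨-, hxU⟩)
    exacts [hyU' hyU, hxU (h.subset n hxF)]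
  · filter_upwards [(h.isClosed n).isOpen_compl.mem_nhds hxF] with y hyF
    rintro (⟨hxF', -⟩ | ⟨hyF', -⟩)
    exacts [hxF hxF', hyF hyF']

theorem symmetricDist_pairDist [T1Space X] (h : IsClosedPairNetwork F U) :
    SymmetricDist (pairDist F U) := by
  refine ⟨fun x y => invSuccFind_nonneg, fun x y => ?_, fun x y => ?_⟩
  · rw [pairDist, invSuccFind_eq_zero_iff]
    refine ⟨fun hsep => ?_, by rintro rfl; exact fun n => h.not_pairSeparates_self n x⟩
    by_contra hxy
    obtain ⟨n, hn⟩ := h.exists_pairSeparates hxy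
    exact hsep n hn
  · simp only [pairDist, pairSeparates_comm (x := x)]

theorem nhds_basis_pairDist (h : IsClosedPairNetwork F U) (x : X) :
    (𝓝 x).HasBasis (fun ε : ℝ => 0 < ε) fun ε => {y | pairDist F U x y < ε} := by
  refine ⟨fun V => ⟨fun hV => ?_, fun ⟨ε, hε, hball⟩ => ?_⟩⟩
  · obtain ⟨W, hWV, hW, hxW⟩ := mem_nhds_iff.mp hV
    obtain ⟨n, hxF, hUW⟩ := h.exists_mem_subset x W hW hxW
    refine ⟨1 / (n + 1), by positivity, fun y hy => hWV (hUW ?_)⟩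
    by_contra hyU
    exact (invSuccFind_lt_iff n).mp hy n le_rfl (.inl ⟨hxF, hyU⟩)
  · obtain ⟨N, hN⟩ := exists_nat_one_div_lt hε
    have hballN : {y | pairDist F U x y < 1 / (N + 1)} ∈ 𝓝 x := by
      simp only [pairDist, invSuccFind_lt_iff, ofPred_forall]
      exact (biInter_mem (finite_le_nat N)).mpr fun n _ => h.setOf_not_pairSeparates_mem_nhds n x
    exact mem_of_superset hballN fun y hy => hball (hy.trans hN)

end IsClosedPairNetwork

end PairNetwork

open Set Classical in
/-- Every perfect second-countable T1 space is symmetrizable. -/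
theorem perfect_symmetrizable {X : Type*} [TopologicalSpace X]
    [SecondCountableTopology X] [T1Space X]
    (hperf : ∀ F : Set X, IsClosed F → IsGδ F) :
    Symmetrizable X := by
  obtain ⟨F, U, h⟩ := exists_isClosedPairNetwork hperf
  exact ⟨_, h.symmetricDist_pairDist, .of_hasBasis h.nhds_basis_pairDist⟩
end

section
/- A second-countable Hausdorff topological space is symmetrizable if and only if it is perfect. -/
/-!
Forward direction: let `d` generate the topology of a first-countable Hausdorff space. If some
ball `{x | d y x < ε}` were not a neighbourhood of `y`, a sequence `z` outside it would converge
to `y`. Then `range z` is not closed, so some `x ∉ range z` is `d`-adherent to it; but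
`insert y (range z)` is compact, hence closed, which forces `x = y`, absurd. So the balls form
neighbourhood bases, and by symmetry a closed `F` is `⋂ n, ⋃ y ∈ F, interior (ball y (1/(n+1)))`.

Backward direction: basic open sets are `Fσ`, so there are pairs `C m ⊆ V m` (closed inside open)
such that every neighbourhood of every `x` contains some `V m` with `x ∈ C m`. Setting
`d x y = 1/(m+1)` for the least `m` at which the pair `C m ⊆ V m` separates `x` and `y` gives a
symmetric whose balls form neighbourhood bases.
-/

open Filter Topology Set

section BallNeighbourhoods

variable {X : Type*} [TopologicalSpace X] {d : X → X → ℝ}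

theorem generatesTopology_of_hasBasis
    (h : ∀ x, (𝓝 x).HasBasis (fun ε : ℝ => 0 < ε) fun ε => {y | d x y < ε}) :
    GeneratesTopology d := fun U => by
  rw [isOpen_iff_mem_nhds]
  exact forall₂_congr fun x _ => (h x).mem_iff

theorem IsClosed.isGδ_of_hasBasis (hsymm : ∀ x y, d x y = d y x)
    (h : ∀ x, (𝓝 x).HasBasis (fun ε : ℝ => 0 < ε) fun ε => {y | d x y < ε})
    {F : Set X} (hF : IsClosed F) : IsGδ F := by
  have hF_eq : F = ⋂ n : ℕ, ⋃ y ∈ F, interior {x | d y x < ((n : ℝ) + 1)⁻¹} := by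
    refine Subset.antisymm (fun y hy => mem_iInter.2 fun n => mem_biUnion hy ?_) fun x hx => ?_
    · exact mem_interior_iff_mem_nhds.2 ((h y).mem_of_mem (by positivity))
    · by_contra hxF
      obtain ⟨ε, hε, hball⟩ := (h x).mem_iff.1 (hF.isOpen_compl.mem_nhds hxF)
      obtain ⟨n, hn⟩ := exists_nat_one_div_lt hε
      obtain ⟨y, hyF, hxy⟩ := mem_iUnion₂.1 (mem_iInter.1 hx n)
      have hdy : d x y < ε := by
        have hyx : d y x < ((n : ℝ) + 1)⁻¹ := interior_subset (s := {x | d y x < _}) hxy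
        rw [hsymm]
        exact hyx.trans (one_div ((n : ℝ) + 1) ▸ hn)
      exact hball hdy hyF
  rw [hF_eq]
  exact .iInter_of_isOpen fun n => isOpen_biUnion fun y _ => isOpen_interior

namespace GeneratesTopology

theorem isClosed_iff (hg : GeneratesTopology d) {A : Set X} :
    IsClosed A ↔ ∀ x, (∀ ε > 0, ∃ a ∈ A, d x a < ε) → x ∈ A := by
  rw [← isOpen_compl_iff, hg]
  refine forall_congr' fun x => ?_
  rw [mem_compl_iff, not_imp_comm]
  simp only [subset_def, mem_ofPred_eq, mem_compl_iff]
  push Not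
  simp only [and_comm]

theorem exists_lt_of_mem_closure (hg : GeneratesTopology d) {A : Set X} {y : X}
    (hA : IsClosed (insert y A)) (hyA : y ∈ closure A) (hy : y ∉ A) {ε : ℝ} (hε : 0 < ε) :
    ∃ a ∈ A, d y a < ε := by
  obtain ⟨x, hx, hxA⟩ : ∃ x, (∀ ε > 0, ∃ a ∈ A, d x a < ε) ∧ x ∉ A := by
    by_contra! h
    exact hy (((hg.isClosed_iff).2 h).closure_subset hyA)
  obtain rfl : x = y := by
    refine (mem_insert_iff.1 (hg.isClosed_iff.1 hA x fun δ hδ => ?_)).resolve_right hxA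
    obtain ⟨a, ha, hxa⟩ := hx δ hδ
    exact ⟨a, mem_insert_of_mem _ ha, hxa⟩
  exact hx ε hε

theorem ball_mem_nhds [FirstCountableTopology X] [T2Space X] (hg : GeneratesTopology d)
    {y : X} (hy : d y y = 0) {ε : ℝ} (hε : 0 < ε) : {x | d y x < ε} ∈ 𝓝 y := by
  by_contra hball
  have hy_cl : y ∈ closure {x | d y x < ε}ᶜ := by
    rwa [closure_compl, mem_compl_iff, mem_interior_iff_mem_nhds]
  obtain ⟨z, hz_far, hz⟩ := mem_closure_iff_seq_limit.1 hy_cl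
  have hy_range : y ∉ range z := by
    rintro ⟨k, rfl⟩
    exact hz_far k (by simpa [mem_ofPred, hy] using hε)
  obtain ⟨_, ⟨k, rfl⟩, hk⟩ := hg.exists_lt_of_mem_closure hz.isCompact_insert_range.isClosed
    (mem_closure_of_tendsto hz (.of_forall mem_range_self)) hy_range hε
  exact hz_far k hk

theorem hasBasis_nhds [FirstCountableTopology X] [T2Space X] (hg : GeneratesTopology d)
    (hdiag : ∀ x, d x x = 0) (x : X) :
    (𝓝 x).HasBasis (fun ε : ℝ => 0 < ε) fun ε => {y | d x y < ε} := by
  refine ⟨fun t => ⟨fun ht => ?_, fun ⟨ε, hε, hsub⟩ =>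
    mem_of_superset (hg.ball_mem_nhds (hdiag x) hε) hsub⟩⟩
  obtain ⟨U, hUt, hU, hxU⟩ := mem_nhds_iff.1 ht
  obtain ⟨ε, hε, hsub⟩ := (hg U).1 hU x hxU
  exact ⟨ε, hε, hsub.trans hUt⟩

end GeneratesTopology

end BallNeighbourhoods

section SeparatingPairs

variable {X : Type*} (C V : ℕ → Set X)

def separatingIndices (x y : X) : Set ℕ :=
  {m | x ∈ C m ∧ y ∉ V m ∨ y ∈ C m ∧ x ∉ V m}

-- `separatingIndices C V x x = ∅` as soon as `C ⊆ V`, and `sInf ∅ = 0`: hence the case `x = y`.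
open scoped Classical in
noncomputable def sepDist (x y : X) : ℝ :=
  if x = y then 0 else ((sInf (separatingIndices C V x y) : ℕ) + 1 : ℝ)⁻¹

variable {C V}

theorem separatingIndices_comm (x y : X) :
    separatingIndices C V x y = separatingIndices C V y x := by
  ext m
  exact or_comm

theorem symmetricDist_sepDist : SymmetricDist (sepDist C V) := by
  refine ⟨fun x y => ?_, fun x y => ?_, fun x y => ?_⟩
  · unfold sepDist; split_ifs <;> positivity
  · unfold sepDist
    split_ifs with h
    · simp [h]
    · simp only [h, iff_false]
      positivity
  · unfold sepDist
    rw [separatingIndices_comm]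
    split_ifs with hxy hyx hyx
    exacts [rfl, (hyx hxy.symm).elim, (hxy hyx.symm).elim, rfl]

theorem setOf_sepDist_lt_subset (hCV : ∀ m, C m ⊆ V m) {x : X} {m : ℕ} (hx : x ∈ C m) :
    {y | sepDist C V x y < ((m : ℝ) + 1)⁻¹} ⊆ V m := by
  intro y hy
  by_cases hxy : x = y
  · exact hxy ▸ hCV m hx
  · simp only [mem_ofPred_eq, sepDist, if_neg hxy] at hy
    have hm : m < sInf (separatingIndices C V x y) := by
      have := (inv_lt_inv₀ (by positivity) (by positivity)).1 hy
      exact_mod_cast (add_lt_add_iff_right 1).1 this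
    by_contra hyV
    exact Nat.notMem_of_lt_sInf hm (Or.inl ⟨hx, hyV⟩)

variable [TopologicalSpace X]

theorem eventually_notMem_separatingIndices {m : ℕ} (hC : IsClosed (C m)) (hV : IsOpen (V m))
    (hCV : C m ⊆ V m) (x : X) : ∀ᶠ y in 𝓝 x, m ∉ separatingIndices C V x y := by
  by_cases hx : x ∈ V m
  · filter_upwards [hV.mem_nhds hx] with y hy
    simp [separatingIndices, hx, hy]
  · have hxC : x ∉ C m := fun h => hx (hCV h)
    filter_upwards [hC.isOpen_compl.mem_nhds hxC] with y hy
    simp [separatingIndices, hxC, hx, show y ∉ C m from hy]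

theorem separatingIndices_nonempty [T1Space X]
    (hreach : ∀ x, ∀ U ∈ 𝓝 x, ∃ m, x ∈ C m ∧ V m ⊆ U) {x y : X} (hxy : x ≠ y) :
    (separatingIndices C V x y).Nonempty := by
  obtain ⟨m, hxm, hmy⟩ := hreach x _ (compl_singleton_mem_nhds hxy)
  exact ⟨m, Or.inl ⟨hxm, fun hy => hmy hy rfl⟩⟩

theorem sepDist_ball_mem_nhds [T1Space X] (hC : ∀ m, IsClosed (C m)) (hV : ∀ m, IsOpen (V m))
    (hCV : ∀ m, C m ⊆ V m) (hreach : ∀ x, ∀ U ∈ 𝓝 x, ∃ m, x ∈ C m ∧ V m ⊆ U)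
    (x : X) {ε : ℝ} (hε : 0 < ε) : {y | sepDist C V x y < ε} ∈ 𝓝 x := by
  obtain ⟨M, hM⟩ := exists_nat_one_div_lt hε
  have hfar : ∀ᶠ y in 𝓝 x, ∀ m ∈ Iic M, m ∉ separatingIndices C V x y :=
    (finite_Iic M).eventually_all.2 fun m _ =>
      eventually_notMem_separatingIndices (hC m) (hV m) (hCV m) x
  filter_upwards [hfar] with y hy
  by_cases hxy : x = y
  · simpa [sepDist, hxy] using hε
  have hM_lt : M < sInf (separatingIndices C V x y) := by
    by_contra! h
    exact hy _ h (Nat.sInf_mem (separatingIndices_nonempty hreach hxy))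
  simp only [sepDist, if_neg hxy]
  refine lt_of_le_of_lt ?_ hM
  rw [one_div]
  gcongr

theorem sepDist_hasBasis_nhds [T1Space X] (hC : ∀ m, IsClosed (C m)) (hV : ∀ m, IsOpen (V m))
    (hCV : ∀ m, C m ⊆ V m) (hreach : ∀ x, ∀ U ∈ 𝓝 x, ∃ m, x ∈ C m ∧ V m ⊆ U) (x : X) :
    (𝓝 x).HasBasis (fun ε : ℝ => 0 < ε) fun ε => {y | sepDist C V x y < ε} := by
  refine ⟨fun U => ⟨fun hU => ?_, fun ⟨ε, hε, hsub⟩ =>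
    mem_of_superset (sepDist_ball_mem_nhds hC hV hCV hreach x hε) hsub⟩⟩
  obtain ⟨m, hxm, hmU⟩ := hreach x U hU
  exact ⟨_, by positivity, (setOf_sepDist_lt_subset hCV hxm).trans hmU⟩

end SeparatingPairs

theorem exists_closed_subset_open_seq {X : Type*} [TopologicalSpace X]
    [SecondCountableTopology X] (hperf : ∀ F : Set X, IsClosed F → IsGδ F) :
    ∃ C V : ℕ → Set X, (∀ m, IsClosed (C m)) ∧ (∀ m, IsOpen (V m)) ∧ (∀ m, C m ⊆ V m) ∧
      ∀ x, ∀ U ∈ 𝓝 x, ∃ m, x ∈ C m ∧ V m ⊆ U := by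
  obtain ⟨b, hb⟩ := TopologicalSpace.exists_seq_basis X
  have hb_open : ∀ n, IsOpen (b n) := fun n => hb.isOpen (mem_range_self n)
  choose g hg_open hg using fun n => (hperf _ (hb_open n).isClosed_compl).eq_iInter_nat
  refine ⟨fun m => (g m.unpair.1 m.unpair.2)ᶜ, fun m => b m.unpair.1,
    fun m => (hg_open _ _).isClosed_compl, fun m => hb_open _, fun m => ?_, fun x U hU => ?_⟩
  · rw [compl_subset_comm, hg]
    exact iInter_subset _ _
  · obtain ⟨_, ⟨n, rfl⟩, hxn, hnU⟩ := hb.mem_nhds_iff.1 hU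
    obtain ⟨k, hk⟩ : ∃ k, x ∉ g n k := by
      simpa [← not_forall, ← mem_iInter, ← hg n] using hxn
    exact ⟨Nat.pair n k, by simpa using hk, by simpa using hnU⟩

/-- A second-countable Hausdorff space is symmetrizable iff it is perfect. -/
theorem symmetrizable_iff_perfect {X : Type*} [TopologicalSpace X]
    [SecondCountableTopology X] [T2Space X] :
    Symmetrizable X ↔ (∀ F : Set X, IsClosed F → IsGδ F) := by
  constructor
  · rintro ⟨d, ⟨-, hzero, hsymm⟩, hg⟩ F hF
    exact hF.isGδ_of_hasBasis hsymm (hg.hasBasis_nhds fun x => (hzero x x).2 rfl)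
  · intro hperf
    obtain ⟨C, V, hC, hV, hCV, hreach⟩ := exists_closed_subset_open_seq hperf
    exact ⟨sepDist C V, symmetricDist_sepDist,
      generatesTopology_of_hasBasis (sepDist_hasBasis_nhds hC hV hCV hreach)⟩
end

section
/- Let X be a second-countable functionally Hausdorff topological space such that every second-countable metrizable topological space of cardinality at most the cardinality of X is a Q-space (equivalently, the cardinality of X is strictly less than the cardinal 𝔮₀, the smallest cardinality of a second-countable metrizable space that is not a Q-space). Then X is symmetrizable. -/
/-- A topological space is a Q-space if every subset is a Gδ-set. -/
def QSpace (X : Type*) [TopologicalSpace X] : Prop := ∀ A : Set X, IsGδ A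

/-- A space is functionally Hausdorff if distinct points are separated by a
continuous real-valued function. -/
def FunctionallyHausdorff (X : Type*) [TopologicalSpace X] : Prop :=
  ∀ x y : X, x ≠ y → ∃ f : X → ℝ, Continuous f ∧ f x ≠ f y

universe u

open Set Filter Topology TopologicalSpace Function

theorem FunctionallyHausdorff.exists_continuous_injective_pi {X : Type u} [TopologicalSpace X]
    [SecondCountableTopology X] (hX : FunctionallyHausdorff X) :
    ∃ (ι : Type u) (_ : Countable ι) (g : X → ι → ℝ), Continuous g ∧ Injective g := by
  set B := countableBasis X
  let Sep : (X → ℝ) → B × B → Prop := fun h p => ∀ a ∈ (p.1 : Set X), ∀ b ∈ (p.2 : Set X), h a < h b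
  have hB : ∀ p : B × B, ∃ h : X → ℝ, Continuous h ∧
      ((∃ h' : X → ℝ, Continuous h' ∧ Sep h' p) → Sep h p) := by
    intro p
    by_cases hp : ∃ h' : X → ℝ, Continuous h' ∧ Sep h' p
    · obtain ⟨h, hc, hlt⟩ := hp
      exact ⟨h, hc, fun _ => hlt⟩
    · exact ⟨0, continuous_const, fun h => absurd h hp⟩
  choose F hFc hF using hB
  have hsep : ∀ x y : X, ∀ h : X → ℝ, Continuous h → h x < h y → ∃ p, F p x < F p y := by
    intro x y h hc hlt
    set t := (h x + h y) / 2
    obtain ⟨B₁, hB₁, hxB₁, hB₁t⟩ := (isBasis_countableBasis X).exists_subset_of_mem_open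
      (show x ∈ h ⁻¹' Iio t by simp only [mem_preimage, mem_Iio, t]; linarith)
      (isOpen_Iio.preimage hc)
    obtain ⟨B₂, hB₂, hyB₂, hB₂t⟩ := (isBasis_countableBasis X).exists_subset_of_mem_open
      (show y ∈ h ⁻¹' Ioi t by simp only [mem_preimage, mem_Ioi, t]; linarith)
      (isOpen_Ioi.preimage hc)
    exact ⟨(⟨B₁, hB₁⟩, ⟨B₂, hB₂⟩),
      hF _ ⟨h, hc, fun a ha b hb => (hB₁t ha).trans (hB₂t hb)⟩ x hxB₁ y hyB₂⟩
  have : Countable B := (countable_countableBasis X).to_subtype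
  refine ⟨B × B, inferInstance, fun x p => F p x, continuous_pi hFc, fun x y hxy => ?_⟩
  by_contra hne
  obtain ⟨h, hc, hh⟩ := hX x y hne
  rcases hh.lt_or_gt with hlt | hlt
  · obtain ⟨p, hp⟩ := hsep x y h hc hlt
    exact hp.ne (congrFun hxy p)
  · obtain ⟨p, hp⟩ := hsep y x h hc hlt
    exact hp.ne' (congrFun hxy p)

def WithInducedTopology {X Y : Type*} (_g : X → Y) : Type _ := X

namespace WithInducedTopology

variable {X Y : Type*} (g : X → Y)

def mk : X → WithInducedTopology g := id

theorem mk_injective : Injective (mk g) := injective_id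

variable [TopologicalSpace Y]

instance : TopologicalSpace (WithInducedTopology g) := TopologicalSpace.induced g ‹_›

instance [SecondCountableTopology Y] : SecondCountableTopology (WithInducedTopology g) :=
  secondCountableTopology_induced _ _ g

theorem metrizableSpace [MetrizableSpace Y] (hg : Injective g) :
    MetrizableSpace (WithInducedTopology g) :=
  IsEmbedding.metrizableSpace (f := (g : WithInducedTopology g → Y)) ⟨⟨rfl⟩, hg⟩

theorem continuous_mk [TopologicalSpace X] {g : X → Y} (hg : Continuous g) : Continuous (mk g) :=
  continuous_induced_rng.2 hg

end WithInducedTopology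

theorem exists_radius_of_isGδ {X M : Type*} [TopologicalSpace X] [PseudoMetricSpace M]
    {e : X → M} (he : Continuous e) {s : Set X} {G H : Set M} (hG : IsGδ G) (hH : IsGδ H)
    (hGs : e ⁻¹' G = s) (hHs : e ⁻¹' H = sᶜ) :
    ∃ r : X → ℝ, (∀ y ∈ s, 0 < r y) ∧ ∀ x ∉ s, ∀ᶠ y in 𝓝 x, y ∈ s → r y ≤ dist (e x) (e y) := by
  obtain ⟨W, hWo, rfl⟩ := isGδ_iff_eq_iInter_nat.1 hG
  obtain ⟨V, hVo, rfl⟩ := isGδ_iff_eq_iInter_nat.1 hH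
  have hW : ∀ z, z ∈ s ↔ ∀ i, e z ∈ W i := by simp [← hGs]
  have hV : ∀ z, z ∉ s ↔ ∀ i, e z ∈ V i := by simp [← mem_compl_iff, ← hHs]
  have hj : ∀ y, ∃ j, y ∈ s → e y ∉ V j := by
    intro y
    by_cases hy : y ∈ s
    · obtain ⟨j, hj⟩ := not_forall.1 (mt (hV y).2 (not_not.2 hy))
      exact ⟨j, fun _ => hj⟩
    · exact ⟨0, fun h => absurd h hy⟩
  choose j hj using hj
  have hr : ∀ y, ∃ ε, y ∈ s → 0 < ε ∧ ∀ z, dist z (e y) < ε → ∀ i ≤ j y, z ∈ W i := by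
    intro y
    by_cases hy : y ∈ s
    · have hnear : ∀ᶠ z in 𝓝 (e y), ∀ i ∈ {i | i ≤ j y}, z ∈ W i :=
        (finite_le_nat _).eventually_all.2 fun i _ => (hWo i).mem_nhds ((hW y).1 hy i)
      obtain ⟨ε, hε, hball⟩ := Metric.eventually_nhds_iff.1 hnear
      exact ⟨ε, fun _ => ⟨hε, fun z hz => hball hz⟩⟩
    · exact ⟨0, fun h => absurd h hy⟩
  choose r hr using hr
  refine ⟨r, fun y hy => (hr y hy).1, fun x hx => ?_⟩
  obtain ⟨k, hk⟩ : ∃ k, e x ∉ W k := by simpa using (hW x).not.1 hx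
  have hnear : ∀ᶠ y in 𝓝 x, ∀ i ∈ {i | i < k}, e y ∈ V i :=
    (finite_lt_nat k).eventually_all.2 fun i _ =>
      (he.tendsto x).eventually ((hVo i).mem_nhds ((hV x).1 hx i))
  -- if `y ∈ s` were `r y`-close to `x`, then `e x ∈ W i` for `i ≤ j y` would force `j y < k`,
  -- hence `e y ∈ V (j y)`, contradicting the choice of `j y`
  filter_upwards [hnear] with y hyV hys
  by_contra hlt
  have hjk : j y < k := by
    by_contra hkj
    exact hk ((hr y hys).2 (e x) (not_le.1 hlt) k (not_lt.1 hkj))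
  exact hj y hys (hyV _ hjk)

open Classical in
noncomputable def firstIndexWeight (S : ℕ → Prop) : ℝ :=
  if h : ∃ n, S n then 2⁻¹ ^ Nat.find h else 0

theorem firstIndexWeight_nonneg (S : ℕ → Prop) : 0 ≤ firstIndexWeight S := by
  unfold firstIndexWeight
  split_ifs <;> positivity

theorem firstIndexWeight_of_forall_not {S : ℕ → Prop} (h : ∀ n, ¬S n) : firstIndexWeight S = 0 :=
  dif_neg (not_exists.2 h)

theorem pow_le_firstIndexWeight {S : ℕ → Prop} {n : ℕ} (hn : S n) :
    2⁻¹ ^ n ≤ firstIndexWeight S := by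
  classical
  rw [firstIndexWeight, dif_pos ⟨n, hn⟩]
  exact pow_le_pow_of_le_one (by norm_num) (by norm_num) (Nat.find_min' _ hn)

theorem firstIndexWeight_le {S : ℕ → Prop} {N : ℕ} (h : ∀ n ≤ N, ¬S n) :
    firstIndexWeight S ≤ 2⁻¹ ^ (N + 1) := by
  classical
  unfold firstIndexWeight
  split_ifs with hS
  · exact pow_le_pow_of_le_one (by norm_num) (by norm_num) ((Nat.lt_find_iff hS N).2 h)
  · positivity

section ExitSymmetric

variable {X M : Type*} [MetricSpace M] {u : ℕ → Set X} {e : X → M} {r : ℕ → X → ℝ}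

def ShortExit (u : ℕ → Set X) (e : X → M) (r : ℕ → X → ℝ) (n : ℕ) (x y : X) : Prop :=
  x ∈ u n ∧ y ∉ u n ∧ dist (e x) (e y) < r n x

noncomputable def exitSymmetric (u : ℕ → Set X) (e : X → M) (r : ℕ → X → ℝ) (x y : X) : ℝ :=
  dist (e x) (e y) + firstIndexWeight fun n => ShortExit u e r n x y ∨ ShortExit u e r n y x

theorem dist_le_exitSymmetric (x y : X) : dist (e x) (e y) ≤ exitSymmetric u e r x y :=
  le_add_of_nonneg_right (firstIndexWeight_nonneg _)

theorem symmetricDist_exitSymmetric (he : Injective e) : SymmetricDist (exitSymmetric u e r) := by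
  refine ⟨fun x y => dist_nonneg.trans (dist_le_exitSymmetric x y),
    fun x y => ⟨fun h => he ?_, ?_⟩, fun x y => ?_⟩
  · exact dist_eq_zero.1 (le_antisymm (h ▸ dist_le_exitSymmetric x y) dist_nonneg)
  · rintro rfl
    rw [exitSymmetric, dist_self, zero_add]
    exact firstIndexWeight_of_forall_not fun n h => by
      rcases h with ⟨hx, hx', -⟩ | ⟨hx, hx', -⟩ <;> exact hx' hx
  · simp only [exitSymmetric, dist_comm, or_comm]

theorem two_inv_pow_le_exitSymmetric {n : ℕ} {x y : X} (h : ShortExit u e r n x y) :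
    2⁻¹ ^ n ≤ exitSymmetric u e r x y :=
  le_add_of_nonneg_of_le dist_nonneg (pow_le_firstIndexWeight (Or.inl h))

variable [TopologicalSpace X]

theorem exists_exitSymmetric_ball_subset (hu : IsTopologicalBasis (range u))
    (hr_pos : ∀ n, ∀ y ∈ u n, 0 < r n y) {U : Set X} (hU : IsOpen U) {x : X} (hx : x ∈ U) :
    ∃ ε > 0, {y | exitSymmetric u e r x y < ε} ⊆ U := by
  obtain ⟨_, ⟨n, rfl⟩, hxn, hnU⟩ := hu.exists_subset_of_mem_open hx hU
  refine ⟨min (2⁻¹ ^ n) (r n x), lt_min (by positivity) (hr_pos n x hxn), fun y hy => hnU ?_⟩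
  by_contra hyn
  by_cases hclose : dist (e x) (e y) < r n x
  · exact ((min_le_left _ _).trans (two_inv_pow_le_exitSymmetric ⟨hxn, hyn, hclose⟩)).not_gt hy
  · exact ((min_le_right _ _).trans ((not_lt.1 hclose).trans (dist_le_exitSymmetric x y))).not_gt hy

theorem eventually_not_shortExit (hu : ∀ n, IsOpen (u n))
    (hr : ∀ n, ∀ x ∉ u n, ∀ᶠ y in 𝓝 x, y ∈ u n → r n y ≤ dist (e x) (e y)) (n : ℕ) (x : X) :
    ∀ᶠ y in 𝓝 x, ¬(ShortExit u e r n x y ∨ ShortExit u e r n y x) := by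
  by_cases hx : x ∈ u n
  · filter_upwards [(hu n).mem_nhds hx] with y hy
    rintro (⟨-, hy', -⟩ | ⟨-, hx', -⟩)
    exacts [hy' hy, hx' hx]
  · filter_upwards [hr n x hx] with y hy
    rintro (⟨hx', -⟩ | ⟨hy', -, hclose⟩)
    exacts [hx hx', (hy hy').not_gt (dist_comm (e x) (e y) ▸ hclose)]

theorem isOpen_of_forall_exitSymmetric_ball_subset (he : Continuous e) (hu : ∀ n, IsOpen (u n))
    (hr : ∀ n, ∀ x ∉ u n, ∀ᶠ y in 𝓝 x, y ∈ u n → r n y ≤ dist (e x) (e y)) {U : Set X}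
    (hU : ∀ x ∈ U, ∃ ε > 0, {y | exitSymmetric u e r x y < ε} ⊆ U) : IsOpen U := by
  refine isOpen_iff_mem_nhds.2 fun x hx => ?_
  obtain ⟨ε, hε, hball⟩ := hU x hx
  obtain ⟨N, hN⟩ := exists_pow_lt_of_lt_one (half_pos hε) (by norm_num : (2⁻¹ : ℝ) < 1)
  have hnear : ∀ᶠ y in 𝓝 x, dist (e y) (e x) < ε / 2 :=
    (he.tendsto x).eventually (Metric.ball_mem_nhds _ (half_pos hε))
  have hexits : ∀ᶠ y in 𝓝 x, ∀ n ∈ {n | n ≤ N},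
      ¬(ShortExit u e r n x y ∨ ShortExit u e r n y x) :=
    (finite_le_nat N).eventually_all.2 fun n _ => eventually_not_shortExit hu hr n x
  filter_upwards [hnear, hexits] with y hy hyN
  apply hball
  have hw := firstIndexWeight_le hyN
  have := pow_le_pow_of_le_one (by norm_num : (0 : ℝ) ≤ 2⁻¹) (by norm_num) (N.le_add_right 1)
  show dist (e x) (e y) + _ < ε
  rw [dist_comm]
  linarith

theorem symmetrizable_of_radii (hu : IsTopologicalBasis (range u)) (he : Continuous e)
    (he' : Injective e) (hr_pos : ∀ n, ∀ y ∈ u n, 0 < r n y)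
    (hr : ∀ n, ∀ x ∉ u n, ∀ᶠ y in 𝓝 x, y ∈ u n → r n y ≤ dist (e x) (e y)) :
    Symmetrizable X :=
  ⟨exitSymmetric u e r, symmetricDist_exitSymmetric he', fun _ =>
    ⟨fun hU _ hx => exists_exitSymmetric_ball_subset hu hr_pos hU hx,
      isOpen_of_forall_exitSymmetric_ball_subset he (fun _ => hu.isOpen (mem_range_self _)) hr⟩⟩

end ExitSymmetric

/-- Every second-countable functionally Hausdorff space of cardinality `< 𝔮₀`
is symmetrizable. -/
theorem functionallyHausdorff_small_symmetrizable {X : Type u} [TopologicalSpace X]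
    [SecondCountableTopology X] (hfH : FunctionallyHausdorff X)
    (hsmall : ∀ (Y : Type u) [TopologicalSpace Y] [SecondCountableTopology Y]
      [TopologicalSpace.MetrizableSpace Y],
      Cardinal.mk Y ≤ Cardinal.mk X → QSpace Y) :
    Symmetrizable X := by
  obtain ⟨ι, _, g, hgc, hgi⟩ := hfH.exists_continuous_injective_pi
  have := WithInducedTopology.metrizableSpace g hgi
  have hQ : QSpace (WithInducedTopology g) := hsmall _ le_rfl
  let := metrizableSpaceMetric (WithInducedTopology g)
  have he := WithInducedTopology.continuous_mk hgc
  obtain ⟨u, hu⟩ := exists_seq_basis X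
  choose r hr_pos hr using fun n => exists_radius_of_isGδ he (hQ (u n)) (hQ (u n)ᶜ) rfl rfl
  exact symmetrizable_of_radii hu he (WithInducedTopology.mk_injective g) hr_pos hr
end

section
/- Let X be a second-countable T1 topological space such that every second-countable T1 topological space of cardinality at most the cardinality of X is a Q-space (equivalently, the cardinality of X is strictly less than the cardinal 𝔮₁, the smallest cardinality of a second-countable T1-space that is not a Q-space). Then X is symmetrizable. -/
/-!
Enumerate a countable base `B n`. In a Q-space every open set is an `Fσ`, so
`B n = ⋃ k, F n k` with closed `F n k` increasing in `k`. Call `x` and `y` `k`-close if, for every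
`n ≤ k`, either point lying in `F n k` forces the other into `B n`. These relations are symmetric
and decrease in `k`, and the `k`-close sets of a point `x` form a neighbourhood base at `x`: the
condition on `y` is open around `x` since `B n` is open, `F n k` is closed and `F n k ⊆ B n`.
Hence `d x y = 1 / (m + 1)`, with `m` the first level at which `x` and `y` are not close, is a
symmetric whose `1 / (k + 1)`-balls are exactly the `k`-close sets.
-/

open Set Filter Topology TopologicalSpace

noncomputable def invFirstFailure (p : ℕ → Prop) : ℝ :=
  open Classical in if h : ∃ k, ¬ p k then ((Nat.find h : ℝ) + 1)⁻¹ else 0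

lemma invFirstFailure_nonneg (p : ℕ → Prop) : 0 ≤ invFirstFailure p := by
  unfold invFirstFailure
  split_ifs <;> positivity

lemma invFirstFailure_eq_zero_iff (p : ℕ → Prop) : invFirstFailure p = 0 ↔ ∀ k, p k := by
  unfold invFirstFailure
  split_ifs with h
  · obtain ⟨k, hk⟩ := h
    rw [inv_eq_zero]
    exact iff_of_false (Nat.cast_add_one_ne_zero _) fun H => hk (H k)
  · simp only [not_exists, not_not] at h
    simp [h]

lemma Antitone.invFirstFailure_lt_iff {p : ℕ → Prop} (hp : Antitone p) (k : ℕ) :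
    invFirstFailure p < ((k : ℝ) + 1)⁻¹ ↔ p k := by
  classical
  unfold invFirstFailure
  split_ifs with h
  · rw [inv_lt_inv₀ (by positivity) (by positivity)]
    norm_cast
    rw [Nat.add_lt_add_iff_right, Nat.lt_find_iff]
    exact ⟨fun H => not_not.1 (H k le_rfl), fun hk j hj => not_not.2 (hp hj hk)⟩
  · simp only [not_exists, not_not] at h
    simp only [h, iff_true]
    positivity

theorem symmetrizable_of_hasBasis {X : Type*} [TopologicalSpace X] [T1Space X]
    (S : ℕ → X → X → Prop) (hanti : ∀ x y, Antitone fun k => S k x y)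
    (hsymm : ∀ k x y, S k x y → S k y x)
    (hbasis : ∀ x, (𝓝 x).HasBasis (fun _ => True) fun k => {y | S k x y}) :
    Symmetrizable X := by
  have hsep : ∀ x y, (∀ k, S k x y) → x = y := by
    intro x y h
    by_contra hxy
    obtain ⟨k, -, hk⟩ := (hbasis x).mem_iff.1 (isOpen_compl_singleton.mem_nhds hxy)
    exact hk (h k) rfl
  have hrefl : ∀ k x, S k x x := fun k x => mem_of_mem_nhds ((hbasis x).mem_of_mem trivial)
  have hball : ∀ x (k : ℕ), {y | invFirstFailure (fun k => S k x y) < ((k : ℝ) + 1)⁻¹} =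
      {y | S k x y} := fun x k => ext fun y => (hanti x y).invFirstFailure_lt_iff k
  refine ⟨fun x y => invFirstFailure fun k => S k x y,
    ⟨fun x y => invFirstFailure_nonneg _, fun x y => ?_, fun x y => ?_⟩, fun U => ?_⟩
  · rw [invFirstFailure_eq_zero_iff]
    exact ⟨hsep x y, by rintro rfl k; exact hrefl k x⟩
  · exact congrArg invFirstFailure (funext fun k => propext ⟨hsymm k x y, hsymm k y x⟩)
  · rw [isOpen_iff_mem_nhds]
    refine forall₂_congr fun x _ => (hbasis x).mem_iff.trans ⟨?_, ?_⟩
    · rintro ⟨k, -, hk⟩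
      exact ⟨_, by positivity, (hball x k).subset.trans hk⟩
    · rintro ⟨ε, hε, hεU⟩
      obtain ⟨k, hk⟩ := exists_nat_one_div_lt hε
      refine ⟨k, trivial, (hball x k).symm.subset.trans fun y hy => hεU ?_⟩
      exact hy.trans (by simpa only [one_div] using hk)

theorem IsGδ.exists_monotone_isClosed_iUnion_eq_compl {X : Type*} [TopologicalSpace X]
    {s : Set X} (hs : IsGδ s) :
    ∃ F : ℕ → Set X, Monotone F ∧ (∀ k, IsClosed (F k)) ∧ ⋃ k, F k = sᶜ := by
  obtain ⟨G, hGopen, rfl⟩ := hs.eq_iInter_nat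
  refine ⟨accumulate fun k => (G k)ᶜ, monotone_accumulate, fun k => ?_, ?_⟩
  · rw [accumulate_def]
    exact (finite_Iic k).isClosed_biUnion fun j _ => (hGopen j).isClosed_compl
  · rw [iUnion_accumulate, compl_iInter]

section LevelClose

variable {X : Type*} (B : ℕ → Set X) (F : ℕ → ℕ → Set X)

def LevelClose (k : ℕ) (x y : X) : Prop :=
  ∀ n ≤ k, (x ∈ F n k → y ∈ B n) ∧ (y ∈ F n k → x ∈ B n)

variable {B F}

lemma LevelClose.symm {k : ℕ} {x y : X} (h : LevelClose B F k x y) : LevelClose B F k y x :=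
  fun n hn => (h n hn).symm

lemma antitone_levelClose (hFmono : ∀ n, Monotone (F n)) (x y : X) :
    Antitone fun k => LevelClose B F k x y :=
  fun _ _ hjk h n hn => ⟨fun hx => (h n (hn.trans hjk)).1 (hFmono n hjk hx),
    fun hy => (h n (hn.trans hjk)).2 (hFmono n hjk hy)⟩

theorem nhds_hasBasis_levelClose [TopologicalSpace X] (hB : IsTopologicalBasis (range B))
    (hFclosed : ∀ n k, IsClosed (F n k)) (hFmono : ∀ n, Monotone (F n))
    (hFB : ∀ n, ⋃ k, F n k = B n) (x : X) :
    (𝓝 x).HasBasis (fun _ => True) fun k => {y | LevelClose B F k x y} := by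
  have hFsub : ∀ n k, F n k ⊆ B n := fun n k => hFB n ▸ subset_iUnion (F n) k
  refine ⟨fun U => ⟨fun hU => ?_, ?_⟩⟩
  · obtain ⟨_, ⟨n, rfl⟩, hxn, hnU⟩ := hB.mem_nhds_iff.1 hU
    obtain ⟨j, hj⟩ := mem_iUnion.1 ((hFB n).symm ▸ hxn)
    exact ⟨max n j, trivial, fun y hy =>
      hnU ((hy n (le_max_left n j)).1 (hFmono n (le_max_right n j) hj))⟩
  · rintro ⟨k, -, hk⟩
    refine mem_of_superset ?_ hk
    refine (eventually_all_finite (finite_Iic k)).2 fun n _ => Eventually.and ?_ ?_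
    · by_cases hx : x ∈ F n k
      · exact ((hB.isOpen ⟨n, rfl⟩).eventually_mem (hFsub n k hx)).mono fun y hy _ => hy
      · exact Eventually.of_forall fun y h => absurd h hx
    · by_cases hx : x ∈ B n
      · exact Eventually.of_forall fun y _ => hx
      · exact ((hFclosed n k).isOpen_compl.eventually_mem fun h => hx (hFsub n k h)).mono
          fun y hy h => absurd h hy

end LevelClose

theorem symmetrizable_of_isTopologicalBasis_of_isGδ_compl {X : Type*} [TopologicalSpace X]
    [T1Space X] {B : ℕ → Set X} (hB : IsTopologicalBasis (range B))
    (hGδ : ∀ n, IsGδ (B n)ᶜ) : Symmetrizable X := by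
  choose F hFmono hFclosed hFB using fun n => (hGδ n).exists_monotone_isClosed_iUnion_eq_compl
  simp only [compl_compl] at hFB
  exact symmetrizable_of_hasBasis (LevelClose B F) (antitone_levelClose hFmono)
    (fun _ _ _ => LevelClose.symm) (nhds_hasBasis_levelClose hB hFclosed hFmono hFB)

theorem QSpace.symmetrizable {X : Type*} [TopologicalSpace X] [SecondCountableTopology X]
    [T1Space X] (hQ : QSpace X) : Symmetrizable X :=
  have ⟨_, hB⟩ := exists_seq_basis X
  symmetrizable_of_isTopologicalBasis_of_isGδ_compl hB fun _ => hQ _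

universe u

/-- Every second-countable T1 space of cardinality `< 𝔮₁` is symmetrizable. -/
theorem t1_small_symmetrizable {X : Type u} [TopologicalSpace X]
    [SecondCountableTopology X] [T1Space X]
    (hsmall : ∀ (Y : Type u) [TopologicalSpace Y] [SecondCountableTopology Y]
      [T1Space Y], Cardinal.mk Y ≤ Cardinal.mk X → QSpace Y) :
    Symmetrizable X :=
  (hsmall X le_rfl).symmetrizable
end

section
/- There exists a second-countable submetrizable topological space X which is not symmetrizable and whose cardinality equals 𝔮₀, the smallest cardinality of a second-countable metrizable space that is not a Q-space. -/
/-- A topological space is submetrizable if there is a coarser metrizable topology. -/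
def Submetrizable (X : Type*) [t : TopologicalSpace X] : Prop :=
  ∃ t' : TopologicalSpace X, (∀ U : Set X, t'.IsOpen U → t.IsOpen U) ∧
    @TopologicalSpace.MetrizableSpace X t'

universe u

open Cardinal in
/-- `𝔮₀`: the smallest cardinality of a second-countable metrizable space
which is not a Q-space. -/
noncomputable def q0 : Cardinal.{u} :=
  sInf { c : Cardinal.{u} | ∃ (Y : Type u) (tY : TopologicalSpace Y),
    @SecondCountableTopology Y tY ∧ @TopologicalSpace.MetrizableSpace Y tY ∧
    ¬ @QSpace Y tY ∧ Cardinal.mk Y = c }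

/-!
Let `Y` be a second-countable metrizable space of cardinality `𝔮₀` with a subset `B` that is not
a `Gδ`, and refine the topology of `Y` by declaring `Bᶜ` open. The result is second countable and
finer than a metrizable topology. At points of `B` the neighbourhoods are unchanged, so if a
symmetric `d` generated the new topology, then `Bᶜ` would be the union of the closures of
`Aₙ = {x | the d-ball of radius 1/(n+1) about x lies in Bᶜ}`: a sequence in `Aₙ` converging to a
point of `B` would have to approach it in `d`, which symmetry forbids. Hence `B` would be a `Gδ`.
-/

open Set Filter Topology TopologicalSpace

theorem QSpace.of_continuous_injective {X Y : Type*} [TopologicalSpace X] [TopologicalSpace Y]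
    {f : X → Y} (hQ : QSpace Y) (hf : Continuous f) (hinj : Function.Injective f) : QSpace X :=
  fun A => hinj.preimage_image A ▸ (hQ (f '' A)).preimage hf

theorem not_isGδ_range_ratCast : ¬ IsGδ (range ((↑) : ℚ → ℝ)) := fun h =>
  (Dense.inter_of_Gδ h .setOfPred_irrational Rat.denseRange_cast dense_irrational).nonempty.ne_empty
    (inter_compl_self _)

theorem Real.not_qSpace : ¬ QSpace ℝ := fun h => not_isGδ_range_ratCast (h _)

theorem exists_not_qSpace_mk_eq_q0 :
    ∃ (Y : Type u) (tY : TopologicalSpace Y), @SecondCountableTopology Y tY ∧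
      @MetrizableSpace Y tY ∧ ¬ @QSpace Y tY ∧ Cardinal.mk Y = q0.{u} :=
  show q0.{u} ∈ {c | ∃ (Y : Type u) (tY : TopologicalSpace Y), @SecondCountableTopology Y tY ∧
      @MetrizableSpace Y tY ∧ ¬ @QSpace Y tY ∧ Cardinal.mk Y = c} from
  csInf_mem ⟨_, ULift.{u} ℝ, inferInstance, Homeomorph.ulift.isEmbedding.secondCountableTopology,
    inferInstance, fun h => Real.not_qSpace (h.of_continuous_injective continuous_uliftUp
      ULift.up_injective), rfl⟩

theorem GeneratesTopology.exists_lt_of_tendsto {X : Type*} [TopologicalSpace X] [T2Space X]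
    {d : X → X → ℝ} (hd : GeneratesTopology d) {x : ℕ → X} {y : X}
    (hx : Tendsto x atTop (𝓝 y)) (hxy : ∀ k, x k ≠ y) {ε : ℝ} (hε : 0 < ε) :
    ∃ k, d y (x k) < ε := by
  by_contra! hfar
  have hclosed : IsClosed (range x) := by
    rw [← isOpen_compl_iff, hd]
    intro z hz
    by_cases hzy : z = y
    · subst hzy
      exact ⟨ε, hε, fun w hw ⟨k, hk⟩ => (hk ▸ hfar k).not_gt hw⟩
    · obtain ⟨δ, hδ, hball⟩ := (hd _).1 hx.isCompact_insert_range.isClosed.isOpen_compl z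
        fun h => h.elim hzy hz
      exact ⟨δ, hδ, hball.trans (compl_subset_compl.2 (subset_insert _ _))⟩
  obtain ⟨k, hk⟩ :=
    (hx.eventually (hclosed.isOpen_compl.eventually_mem fun ⟨k, hk⟩ => hxy k hk)).exists
  exact hk ⟨k, rfl⟩

abbrev adjoinOpen {X : Type*} (t : TopologicalSpace X) (U : Set X) : TopologicalSpace X :=
  t ⊓ generateFrom {U}

section adjoinOpen

variable {X : Type*} (t : TopologicalSpace X) (U : Set X)

theorem adjoinOpen_le : adjoinOpen t U ≤ t := inf_le_left

theorem isOpen_adjoinOpen : IsOpen[adjoinOpen t U] U :=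
  (inf_le_right : adjoinOpen t U ≤ generateFrom {U}) U (isOpen_generateFrom_of_mem rfl)

theorem nhds_adjoinOpen_of_notMem {y : X} (hy : y ∉ U) :
    @nhds X (adjoinOpen t U) y = @nhds X t y := by
  rw [adjoinOpen, nhds_inf, nhds_generateFrom]
  exact inf_eq_left.2 (le_iInf₂ fun s ⟨hs, hsU⟩ => absurd (hsU ▸ hs) hy)

theorem secondCountableTopology_adjoinOpen (h : @SecondCountableTopology X t) :
    @SecondCountableTopology X (adjoinOpen t U) := by
  rw [adjoinOpen, @eq_generateFrom_countableBasis X t h, ← generateFrom_union]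
  exact .mk' ((@countable_countableBasis X t h).union (countable_singleton U))

end adjoinOpen

theorem isGδ_compl_of_symmetrizable_adjoinOpen {Y : Type*} [t : TopologicalSpace Y]
    [FrechetUrysohnSpace Y] [T2Space Y] {U : Set Y} (h : @Symmetrizable Y (adjoinOpen t U)) :
    IsGδ Uᶜ := by
  obtain ⟨d, ⟨-, hzero, hsymm⟩, hd⟩ := h
  set A : ℕ → Set Y := fun n => {x | ∀ z, d x z < 1 / (n + 1) → z ∈ U}
  have hU : U = ⋃ n, closure (A n) := by
    refine Subset.antisymm (fun x hx => ?_) (iUnion_subset fun n y hy => ?_)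
    · obtain ⟨ε, hε, hball⟩ := (hd U).1 (isOpen_adjoinOpen t U) x hx
      obtain ⟨n, hn⟩ := exists_nat_one_div_lt hε
      exact mem_iUnion.2 ⟨n, subset_closure fun z hz => hball (hz.trans hn)⟩
    · by_contra hyU
      obtain ⟨x, hxA, hx⟩ := mem_closure_iff_seq_limit.1 hy
      have hxy : ∀ k, x k ≠ y := fun k hk =>
        hyU (hxA k y (by rw [hk, (hzero y y).2 rfl]; positivity))
      obtain ⟨k, hk⟩ := @GeneratesTopology.exists_lt_of_tendsto Y (adjoinOpen t U)
        (t2Space_antitone (adjoinOpen_le t U) ‹_›) d hd x y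
        (by rwa [nhds_adjoinOpen_of_notMem t U hyU]) hxy _ Nat.one_div_pos_of_nat
      exact hyU (hxA k y (hsymm y (x k) ▸ hk))
  rw [hU, compl_iUnion]
  exact .iInter fun n => isClosed_closure.isOpen_compl.isGδ

/-- There is a second-countable submetrizable non-symmetrizable space of cardinality `𝔮₀`. -/
theorem exists_nonsymmetrizable_submetrizable :
    ∃ (X : Type u) (tX : TopologicalSpace X),
      @SecondCountableTopology X tX ∧ @Submetrizable X tX ∧
      ¬ @Symmetrizable X tX ∧ Cardinal.mk X = q0.{u} := by
  obtain ⟨Y, tY, hY2, hYmet, hYQ, hYcard⟩ := exists_not_qSpace_mk_eq_q0.{u}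
  obtain ⟨B, hB⟩ : ∃ B : Set Y, ¬ IsGδ B := by simpa [QSpace] using hYQ
  refine ⟨Y, adjoinOpen tY Bᶜ, secondCountableTopology_adjoinOpen tY Bᶜ hY2,
    ⟨tY, adjoinOpen_le tY Bᶜ, hYmet⟩, fun h => hB ?_, hYcard⟩
  simpa using isGδ_compl_of_symmetrizable_adjoinOpen h
end

section
/- Let X be a topological space with topology τ and let A ⊆ X be a set which is not a Gδ-set in (X, τ). Let τ' be the topology on X generated by τ ∪ {X \ A}. Then A is closed in (X, τ') but A is not a Gδ-set in (X, τ'); in particular, (X, τ') is not perfect. -/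
/-!
Adding `Aᶜ` to the open sets changes nothing on `A`: every new open set `W` contains an old open
set `U` with `W ∩ A ⊆ U`, as one checks along the generation of `W`. Replacing each member of a
countable family of new open sets with intersection `A` by such a `U` gives a countable family
of old open sets with intersection `A`, so `A` would already be Gδ in the old topology.
-/

open Topology TopologicalSpace Set

section DeclaringClosed

variable {X : Type*} (t : TopologicalSpace X) (A : Set X)

theorem exists_isOpen_inter_subset_of_isOpen_generateFrom_compl {W : Set X}
    (hW : IsOpen[generateFrom ({U | IsOpen[t] U} ∪ {Aᶜ})] W) :
    ∃ U, IsOpen[t] U ∧ W ∩ A ⊆ U ∧ U ⊆ W := by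
  induction hW with
  | basic V hV =>
    rcases hV with hV | rfl
    · exact ⟨V, hV, inter_subset_left, subset_rfl⟩
    · exact ⟨∅, @isOpen_empty _ t, by rw [compl_inter_self], empty_subset _⟩
  | univ => exact ⟨univ, @isOpen_univ _ t, subset_univ _, subset_rfl⟩
  | inter V₁ V₂ _ _ ih₁ ih₂ =>
    obtain ⟨U₁, hU₁, hV₁U₁, hU₁V₁⟩ := ih₁
    obtain ⟨U₂, hU₂, hV₂U₂, hU₂V₂⟩ := ih₂
    refine ⟨U₁ ∩ U₂, @IsOpen.inter _ t _ _ hU₁ hU₂, fun x hx => ?_, inter_subset_inter hU₁V₁ hU₂V₂⟩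
    exact ⟨hV₁U₁ ⟨hx.1.1, hx.2⟩, hV₂U₂ ⟨hx.1.2, hx.2⟩⟩
  | sUnion S _ ih =>
    choose U hU hVU hUV using ih
    refine ⟨⋃ (V) (hV : V ∈ S), U V hV,
      @isOpen_iUnion _ _ t _ fun V => @isOpen_iUnion _ _ t _ (hU V), ?_,
      iUnion₂_subset fun V hV => (hUV V hV).trans (subset_sUnion_of_mem hV)⟩
    rintro x ⟨⟨V, hV, hxV⟩, hxA⟩
    exact mem_iUnion₂.2 ⟨V, hV, hVU V hV ⟨hxV, hxA⟩⟩

theorem isGδ_of_isGδ_generateFrom_compl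
    (hA : @IsGδ X (generateFrom ({U | IsOpen[t] U} ∪ {Aᶜ})) A) : @IsGδ X t A := by
  obtain ⟨W, hW, hAW⟩ := (@isGδ_iff_eq_iInter_nat X (generateFrom _) A).1 hA
  choose U hU hWU hUW using fun n =>
    exists_isOpen_inter_subset_of_isOpen_generateFrom_compl t A (hW n)
  have hAU : A = ⋂ n, U n := by
    refine subset_antisymm (subset_iInter fun n x hx => hWU n ⟨?_, hx⟩) ?_
    · rw [hAW] at hx
      exact mem_iInter.1 hx n
    · rw [hAW]
      exact iInter_mono hUW
  exact hAU ▸ @IsGδ.iInter_of_isOpen X ℕ t _ _ hU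

end DeclaringClosed

/-- Refining a topology by declaring a non-Gδ set `A` closed produces a
non-perfect space: `A` is closed but not Gδ in the new topology. -/
theorem not_perfect_of_declaring_closed {X : Type*} (t : TopologicalSpace X)
    (A : Set X) (hA : ¬ @IsGδ X t A) :
    letI t' : TopologicalSpace X := TopologicalSpace.generateFrom ({U | t.IsOpen U} ∪ {Aᶜ})
    @IsClosed X t' A ∧ ¬ @IsGδ X t' A ∧
      ¬ (∀ F : Set X, @IsClosed X t' F → @IsGδ X t' F) := by
  have hclosed : @IsClosed X (generateFrom ({U | IsOpen[t] U} ∪ {Aᶜ})) A :=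
    @IsClosed.mk X (generateFrom _) A (GenerateOpen.basic _ (Or.inr rfl))
  have hnotGδ := mt (isGδ_of_isGδ_generateFrom_compl t A) hA
  exact ⟨hclosed, hnotGδ, fun hperfect => hnotGδ (hperfect A hclosed)⟩
end

section
/- Let X = {-1/n : n ∈ ℕ, n ≥ 1} ∪ {0} ∪ {1/n : n ∈ ℕ, n ≥ 1} ⊆ ℝ and define d : X × X → ℝ by: d(x,y) = max{x,y} if max{x,y} > 0 and min{x,y} < 0; d(x,y) = |x − y| if max{x,y} ≤ 0; d(x,y) = 0 if x = y; and d(x,y) = 1 otherwise. Then d is a symmetric on X, and the topology on X generated by d is not Hausdorff. -/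
/-- The topology generated by a premetric `d`: a set is open iff every point of it
contains some `d`-ball around the point. -/
def premetricTopology {X : Type*} (d : X → X → ℝ) : TopologicalSpace X where
  IsOpen U := ∀ x ∈ U, ∃ ε > 0, ∀ y, d x y < ε → y ∈ U
  isOpen_univ := fun _ _ => ⟨1, one_pos, fun _ _ => trivial⟩
  isOpen_inter := fun U V hU hV x hx => by
    obtain ⟨ε₁, hε₁, h₁⟩ := hU x hx.1
    obtain ⟨ε₂, hε₂, h₂⟩ := hV x hx.2
    exact ⟨min ε₁ ε₂, lt_min hε₁ hε₂, fun y hy =>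
      ⟨h₁ y (hy.trans_le (min_le_left _ _)), h₂ y (hy.trans_le (min_le_right _ _))⟩⟩
  isOpen_sUnion := fun S hS x hx => by
    obtain ⟨U, hU, hxU⟩ := hx
    obtain ⟨ε, hε, h⟩ := hS U hU x hxU
    exact ⟨ε, hε, fun y hy => ⟨U, hU, h y hy⟩⟩

/-- The set `{-1/n : n ≥ 1} ∪ {0} ∪ {1/n : n ≥ 1}` in `ℝ`. -/
def S : Set ℝ :=
  {x | (∃ n : ℕ, 1 ≤ n ∧ x = -(1 / (n : ℝ))) ∨ x = 0 ∨ (∃ n : ℕ, 1 ≤ n ∧ x = 1 / (n : ℝ))}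

/-- The symmetric from the example: `d(x,y) = max{x,y}` if `max{x,y} > 0` and
`min{x,y} < 0`; `|x - y|` if `max{x,y} ≤ 0`; `0` if `x = y`; `1` otherwise. -/
noncomputable def dEx (x y : S) : ℝ :=
  if 0 < max (x : ℝ) (y : ℝ) ∧ min (x : ℝ) (y : ℝ) < 0 then max (x : ℝ) (y : ℝ)
  else if max (x : ℝ) (y : ℝ) ≤ 0 then |(x : ℝ) - (y : ℝ)|
  else if x = y then 0
  else 1

/-! Every negative point `q` of `S` satisfies `dEx q (1/n) = 1/n`, so the sequence `1/n` converges
to every negative point at once; two distinct limits rule out the Hausdorff property. -/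

open Filter Topology

theorem tendsto_nhds_premetricTopology {X ι : Type*} {d : X → X → ℝ} {l : Filter ι}
    {u : ι → X} {x : X} (h : Tendsto (fun i => d x (u i)) l (𝓝 0)) :
    Tendsto u l (@nhds X (premetricTopology d) x) := by
  let := premetricTopology d
  refine (nhds_basis_opens x).tendsto_right_iff.mpr fun U ⟨hxU, hU⟩ => ?_
  obtain ⟨ε, hε, hball⟩ := hU x hxU
  filter_upwards [h (Iio_mem_nhds hε)] with i hi using hball (u i) hi

theorem dEx_comm (x y : S) : dEx x y = dEx y x := by
  unfold dEx
  rw [max_comm (x : ℝ), min_comm (x : ℝ), abs_sub_comm]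
  simp only [eq_comm]

theorem dEx_nonneg (x y : S) : 0 ≤ dEx x y := by
  unfold dEx
  split_ifs with hmixed
  · exact hmixed.1.le
  · exact abs_nonneg _
  · exact le_rfl
  · exact zero_le_one

theorem dEx_eq_zero_iff (x y : S) : dEx x y = 0 ↔ x = y := by
  constructor
  · intro h
    unfold dEx at h
    split_ifs at h with hmixed hnonpos hxy
    · exact absurd h hmixed.1.ne'
    · exact Subtype.ext (sub_eq_zero.mp (abs_eq_zero.mp h))
    · exact hxy
    · exact absurd h one_ne_zero
  · rintro rfl
    simp only [dEx, max_self, min_self, if_true]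
    split_ifs with hmixed
    · exact absurd (hmixed.1.trans hmixed.2) (lt_irrefl _)
    · simp
    · rfl

theorem symmetricDist_dEx : SymmetricDist dEx :=
  ⟨dEx_nonneg, dEx_eq_zero_iff, dEx_comm⟩

theorem dEx_of_neg_of_pos {x y : S} (hx : (x : ℝ) < 0) (hy : 0 < (y : ℝ)) : dEx x y = y := by
  have hxy : (x : ℝ) ≤ y := (hx.trans hy).le
  simp only [dEx, max_eq_right hxy, min_eq_left hxy, hx, hy, and_self, if_true]

noncomputable def invSucc (n : ℕ) : S :=
  ⟨1 / ((n : ℝ) + 1), Or.inr <| Or.inr ⟨n + 1, by omega, by push_cast; rfl⟩⟩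

noncomputable def negInvSucc (n : ℕ) : S :=
  ⟨-(1 / ((n : ℝ) + 1)), Or.inl ⟨n + 1, by omega, by push_cast; rfl⟩⟩

theorem negInvSucc_neg (n : ℕ) : ((negInvSucc n : S) : ℝ) < 0 := by
  simp only [negInvSucc, Left.neg_neg_iff]
  positivity

theorem negInvSucc_injective : Function.Injective negInvSucc := by
  intro m n h
  have h' : -(1 / ((m : ℝ) + 1)) = -(1 / ((n : ℝ) + 1)) := congrArg Subtype.val h
  exact_mod_cast (by simpa using h' : (m : ℝ) = n)

theorem tendsto_invSucc_of_neg {q : S} (hq : (q : ℝ) < 0) :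
    Tendsto invSucc atTop (@nhds S (premetricTopology dEx) q) := by
  refine tendsto_nhds_premetricTopology ?_
  have hd : ∀ n, dEx q (invSucc n) = 1 / ((n : ℝ) + 1) := fun n =>
    dEx_of_neg_of_pos hq (by simp only [invSucc]; positivity)
  simpa only [hd] using tendsto_one_div_add_atTop_nhds_zero_nat

/-- `dEx` is a symmetric on `S` and the topology it generates is not Hausdorff. -/
theorem dEx_symmetric_not_hausdorff :
    SymmetricDist dEx ∧ ¬ @T2Space S (premetricTopology dEx) := by
  refine ⟨symmetricDist_dEx, fun _ => ?_⟩
  let := premetricTopology dEx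
  have h := tendsto_nhds_unique (tendsto_invSucc_of_neg (negInvSucc_neg 0))
    (tendsto_invSucc_of_neg (negInvSucc_neg 1))
  exact absurd (negInvSucc_injective h) zero_ne_one
end
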